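/- arXiv:1011.2431 — 4 statements merged into one kernel-verified Lean document; each statement's English description precedes it below -/
import Mathlib

section
/- Let s be an orthogonal transformation of a finite-dimensional real inner product space V having no nonzero fixed vectors. Then 1 - s is invertible, so the Cayley transform (1+s)(1-s)^{-1} is well-defined, and it is skew-symmetric with respect to the inner product. -/
open RealInnerProductSpace

theorem LinearMap.bijective_id_sub_of_fixed_eq_zero {K V : Type*} [Field K] [AddCommGroup V]
    [Module K V] [FiniteDimensional K V] (f : V →ₗ[K] V) (hf : ∀ v, f v = v → v = 0) :
    Function.Bijective fun v => v - f v := by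
  have hinj : Function.Injective ⇑(LinearMap.id - f : V →ₗ[K] V) :=
    (injective_iff_map_eq_zero _).2 fun v hv => hf v (sub_eq_zero.1 hv).symm
  exact ⟨hinj, LinearMap.injective_iff_surjective.1 hinj⟩

theorem LinearIsometry.inner_add_map_sub_map {𝕜 E : Type*} [RCLike 𝕜] [SeminormedAddCommGroup E]
    [InnerProductSpace 𝕜 E] (s : E →ₗᵢ[𝕜] E) (a b : E) :
    inner 𝕜 (a + s a) (b - s b) = -inner 𝕜 (a - s a) (b + s b) := by
  simp only [inner_add_left, inner_sub_left, inner_add_right, inner_sub_right, s.inner_map_map]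
  ring

/-- If `s` is an orthogonal transformation of a finite-dimensional real inner
product space with no nonzero fixed vectors, then `1 - s` is invertible and the Cayley
transform `(1 + s)(1 - s)⁻¹` is skew-symmetric with respect to the inner product. -/
theorem cayley_transform_skew
    {V : Type*} [NormedAddCommGroup V] [InnerProductSpace ℝ V] [FiniteDimensional ℝ V]
    (s : V ≃ₗᵢ[ℝ] V) (hfix : ∀ v : V, s v = v → v = 0) :
    Function.Bijective (fun v : V => v - s v) ∧
      ∀ C : V →ₗ[ℝ] V, (∀ v : V, C v - s (C v) = v) →
        ∀ x y : V, ⟪C x + s (C x), y⟫ = -⟪x, C y + s (C y)⟫ := by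
  refine ⟨LinearMap.bijective_id_sub_of_fixed_eq_zero s.toLinearEquiv.toLinearMap hfix,
    fun C hC x y => ?_⟩
  have hskew : ⟪C x + s (C x), C y - s (C y)⟫ = -⟪C x - s (C x), C y + s (C y)⟫ :=
    s.toLinearIsometry.inner_add_map_sub_map (C x) (C y)
  rwa [hC, hC] at hskew
end

section
/- Let γ₁, …, γ_{l'} be roots forming a linearly independent set in a Euclidean space, with the first n mutually orthogonal and the last l'-n mutually orthogonal, and let s = s_{γ₁}⋯s_{γ_n} · s_{γ_{n+1}}⋯s_{γ_{l'}} be the product of two involutions s¹, s². Then the restriction of s to the span h' of γ₁, …, γ_{l'} has no nonzero fixed vectors; equivalently 1 - s is invertible on h'. -/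
/-!
A fixed vector `v` of `s_{δ₀} ∘ g`, with `g` the product of the remaining reflections, satisfies
`(s_{δ₀} (g v) - g v) + (g v - v) = 0`, where the first summand lies on the line `ℝ δ₀` and the
second in the span of the remaining roots. Linear independence makes these two subspaces
disjoint, so both summands vanish: `v` is fixed by `s_{δ₀}` and by `g`. By induction `v` is
orthogonal to every root, hence to the whole span, and so `v = 0` if it lies in the span.
-/

open RealInnerProductSpace

/-- The reflection `s_γ(v) = v - 2(v,γ)/(γ,γ) γ` in the root `γ`. -/
noncomputable def rootReflection {E : Type*} [NormedAddCommGroup E] [InnerProductSpace ℝ E]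
    (γ : E) (v : E) : E :=
  v - (2 * ⟪v, γ⟫ / ⟪γ, γ⟫) • γ

section

variable {E : Type*} [NormedAddCommGroup E] [InnerProductSpace ℝ E]

theorem rootReflection_sub_self_mem_span_singleton (δ v : E) :
    rootReflection δ v - v ∈ ℝ ∙ δ :=
  Submodule.mem_span_singleton.2 ⟨-(2 * ⟪v, δ⟫ / ⟪δ, δ⟫), by simp [rootReflection, neg_smul]⟩

theorem rootReflection_eq_self_iff {δ : E} (hδ : δ ≠ 0) (v : E) :
    rootReflection δ v = v ↔ ⟪v, δ⟫ = 0 := by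
  simp [rootReflection, sub_eq_self, smul_eq_zero, hδ]

noncomputable def reflectionProduct {m : ℕ} (γ : Fin m → E) : E → E :=
  (List.ofFn fun i => rootReflection (γ i)).foldr (· ∘ ·) id

theorem reflectionProduct_succ {m : ℕ} (γ : Fin (m + 1) → E) :
    reflectionProduct γ = rootReflection (γ 0) ∘ reflectionProduct (Fin.tail γ) := by
  simp only [reflectionProduct, List.ofFn_succ, List.foldr_cons]
  rfl

theorem reflectionProduct_sub_self_mem_span {m : ℕ} (γ : Fin m → E) (v : E) :
    reflectionProduct γ v - v ∈ Submodule.span ℝ (Set.range γ) := by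
  induction m with
  | zero => simp [reflectionProduct]
  | succ m ih =>
    set w := reflectionProduct (Fin.tail γ) v
    have hw : w - v ∈ Submodule.span ℝ (Set.range γ) :=
      Submodule.span_mono (Set.range_comp_subset_range Fin.succ γ) (ih (Fin.tail γ))
    have hr : rootReflection (γ 0) w - w ∈ Submodule.span ℝ (Set.range γ) :=
      Submodule.span_mono (by simp) (rootReflection_sub_self_mem_span_singleton (γ 0) w)
    rw [reflectionProduct_succ, Function.comp_apply, ← sub_add_sub_cancel _ w]
    exact add_mem hr hw

theorem inner_eq_zero_of_reflectionProduct_eq_self {m : ℕ} {γ : Fin m → E}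
    (hγ : LinearIndependent ℝ γ) {v : E} (hv : reflectionProduct γ v = v) (i : Fin m) :
    ⟪v, γ i⟫ = 0 := by
  induction m with
  | zero => exact i.elim0
  | succ m ih =>
    obtain ⟨hγtail, hγ0⟩ := linearIndependent_finSucc.1 hγ
    set w := reflectionProduct (Fin.tail γ) v
    rw [reflectionProduct_succ, Function.comp_apply] at hv
    have hsum : (rootReflection (γ 0) w - w) + (w - v) = 0 := by
      rw [sub_add_sub_cancel, hv, sub_self]
    have htail_fixed : w - v = 0 :=
      Submodule.disjoint_def.1 (Submodule.disjoint_span_singleton_of_notMem hγ0) _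
        (reflectionProduct_sub_self_mem_span _ v)
        (by rw [eq_neg_of_add_eq_zero_right hsum]
            exact neg_mem (rootReflection_sub_self_mem_span_singleton (γ 0) w))
    have hwv : w = v := sub_eq_zero.1 htail_fixed
    refine Fin.cases ?_ (fun j => ih hγtail hwv j) i
    rw [← rootReflection_eq_self_iff (hγ.ne_zero 0), ← hwv, hv, hwv]

theorem eq_zero_of_mem_span_of_forall_inner_eq_zero {ι : Type*} {γ : ι → E} {v : E} (hv : v ∈ Submodule.span ℝ (Set.range γ))
    (horth : ∀ i, ⟪v, γ i⟫ = 0) : v = 0 := by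
  have hspan : Submodule.span ℝ (Set.range γ) ≤ (ℝ ∙ v)ᗮ := by
    rw [Submodule.span_le]
    rintro _ ⟨i, rfl⟩
    exact Submodule.mem_orthogonal_singleton_iff_inner_right.2 (horth i)
  exact inner_self_eq_zero.1 (Submodule.mem_orthogonal_singleton_iff_inner_right.1 (hspan hv))

end

theorem product_of_two_involutions_no_fixed_vectors_general
    {E : Type*} [NormedAddCommGroup E] [InnerProductSpace ℝ E]
    {l' : ℕ} (γ : Fin l' → E)
    (hind : LinearIndependent ℝ γ)
    (s : E → E)
    (hs : s = (List.ofFn fun i : Fin l' => rootReflection (γ i)).foldr (· ∘ ·) id) :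
    ∀ v ∈ Submodule.span ℝ (Set.range γ), s v = v → v = 0 := by
  subst hs
  intro v hv hfix
  exact eq_zero_of_mem_span_of_forall_inner_eq_zero hv
    (inner_eq_zero_of_reflectionProduct_eq_self hind hfix)

/-- Let `γ₁, …, γ_{l'}` be linearly independent roots, the first `n` of which are
mutually orthogonal and the last `l' - n` of which are mutually orthogonal, and let
`s = s_{γ₁} ⋯ s_{γ_{l'}}` be the product of the two involutions. Then the restriction of `s`
to the span `h'` of the `γ_i` has no nonzero fixed vectors. -/
theorem product_of_two_involutions_no_fixed_vectors
    {E : Type*} [NormedAddCommGroup E] [InnerProductSpace ℝ E]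
    {l' : ℕ} (n : ℕ) (hn : n ≤ l') (γ : Fin l' → E)
    (hind : LinearIndependent ℝ γ)
    (horth₁ : ∀ i j : Fin l', i ≠ j → i.val < n → j.val < n → ⟪γ i, γ j⟫ = 0)
    (horth₂ : ∀ i j : Fin l', i ≠ j → n ≤ i.val → n ≤ j.val → ⟪γ i, γ j⟫ = 0)
    (s : E → E)
    (hs : s = (List.ofFn fun i : Fin l' => rootReflection (γ i)).foldr (· ∘ ·) id) :
    ∀ v ∈ Submodule.span ℝ (Set.range γ), s v = v → v = 0 :=
  product_of_two_involutions_no_fixed_vectors_general γ hind s hs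
end

section
/- With γ₁, …, γ_{l'} as above and s = s_{γ₁} ⋯ s_{γ_{l'}} (product of reflections in the given order), the matrix elements of the Cayley transform C = (1+s)(1-s)^{-1} P_{h'} in the basis γ₁, …, γ_{l'} are given by (C γ_i, γ_j) = ε_{ij} (γ_i, γ_j), where ε_{ij} = -1 if i < j, ε_{ij} = 0 if i = j, and ε_{ij} = 1 if i > j. -/
open RealInnerProductSpace

/-- The sign `ε_{ij}`: `-1` if `i < j`, `0` if `i = j`, `1` if `i > j`. -/
def epsSign {l' : ℕ} (i j : Fin l') : ℝ :=
  if i < j then -1 else if i = j then 0 else 1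

/-
Write `s = s_{γ₀} ∘ s'` with `s'` the product of the remaining reflections. Then
`y - s y = (y - s' y) + c γ₀` with `c = 2 (s' y, γ₀) / (γ₀, γ₀)` and `y - s' y ∈ span (γ₁, …)`,
so by linear independence `y - s y = ∑ a_m γ_m` forces `c = a₀` and `y - s' y = ∑_{m>0} a_m γ_m`.
Induction on the number of reflections then gives
`2 (y, γ_j) = a_j (γ_j, γ_j) + 2 ∑_{m>j} a_m (γ_m, γ_j)`; for `a = δ_i` this is the claim,
since `(y + s y, γ_j) = 2 (y, γ_j) - (γ_i, γ_j)`. A solution `y ∈ h'` of `y - s y = γ_i` exists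
because `1 - s` maps the finite-dimensional `h'` into itself and is injective there.
-/

section

variable {E : Type*} [NormedAddCommGroup E] [InnerProductSpace ℝ E]

lemma sub_rootReflection (g v : E) : v - rootReflection g v = (2 * ⟪v, g⟫ / ⟪g, g⟫) • g :=
  sub_sub_cancel v _

noncomputable def rootReflectionₗ (g : E) : E →ₗ[ℝ] E :=
  LinearMap.id - (2 / ⟪g, g⟫) • (innerₛₗ ℝ g).smulRight g

lemma coe_rootReflectionₗ (g : E) : ⇑(rootReflectionₗ g) = rootReflection g := by
  ext v
  simp only [rootReflectionₗ, rootReflection, LinearMap.sub_apply, LinearMap.id_apply,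
    LinearMap.smul_apply, LinearMap.smulRight_apply, innerₛₗ_apply_apply, smul_smul,
    real_inner_comm g]
  ring_nf

noncomputable def reflectionProd {n : ℕ} (γ : Fin n → E) : E → E :=
  (List.ofFn fun i => rootReflection (γ i)).foldr (· ∘ ·) id

lemma reflectionProd_succ {n : ℕ} (γ : Fin (n + 1) → E) :
    reflectionProd γ = rootReflection (γ 0) ∘ reflectionProd (Fin.tail γ) := by
  simp only [reflectionProd, List.ofFn_succ, List.foldr_cons]
  rfl

noncomputable def reflectionProdₗ {n : ℕ} (γ : Fin n → E) : E →ₗ[ℝ] E :=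
  (List.ofFn fun i => rootReflectionₗ (γ i)).prod

lemma coe_reflectionProdₗ {n : ℕ} (γ : Fin n → E) :
    ⇑(reflectionProdₗ γ) = reflectionProd γ := by
  induction n with
  | zero => rfl
  | succ n ih =>
    rw [reflectionProd_succ, ← ih, ← coe_rootReflectionₗ]
    simp only [reflectionProdₗ, List.ofFn_succ, List.prod_cons, Module.End.coe_mul]
    rfl

lemma sub_reflectionProd_succ {n : ℕ} (γ : Fin (n + 1) → E) (y : E) :
    y - reflectionProd γ y = (y - reflectionProd (Fin.tail γ) y)
      + (2 * ⟪reflectionProd (Fin.tail γ) y, γ 0⟫ / ⟪γ 0, γ 0⟫) • γ 0 := by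
  rw [reflectionProd_succ, Function.comp_apply, ← sub_rootReflection, sub_add_sub_cancel]

lemma sub_reflectionProd_mem_span {n : ℕ} (γ : Fin n → E) (y : E) :
    y - reflectionProd γ y ∈ Submodule.span ℝ (Set.range γ) := by
  induction n with
  | zero => simp [reflectionProd]
  | succ n ih =>
    rw [sub_reflectionProd_succ]
    exact add_mem (Submodule.span_mono (Set.range_comp_subset_range _ _) (ih _))
      (Submodule.smul_mem _ _ (Submodule.subset_span ⟨0, rfl⟩))

theorem two_inner_eq_of_sub_reflectionProd_eq_sum {n : ℕ} {γ : Fin n → E}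
    (hγ : LinearIndependent ℝ γ)
    {a : Fin n → ℝ} {y : E} (hy : y - reflectionProd γ y = ∑ m, a m • γ m) (j : Fin n) :
    2 * ⟪y, γ j⟫ = a j * ⟪γ j, γ j⟫ + 2 * ∑ m ∈ Finset.Ioi j, a m * ⟪γ m, γ j⟫ := by
  induction n with
  | zero => exact j.elim0
  | succ n ih =>
    set c := 2 * ⟪reflectionProd (Fin.tail γ) y, γ 0⟫ / ⟪γ 0, γ 0⟫
    obtain ⟨b, hb⟩ :=
      (Submodule.mem_span_range_iff_exists_fun ℝ).mp (sub_reflectionProd_mem_span (Fin.tail γ) y)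
    obtain rfl : a = Fin.cons c b := by
      funext m
      refine (Fintype.linearIndependent_iffₛ.mp hγ _ _ ?_ m).symm
      rw [← hy, sub_reflectionProd_succ, Fin.sum_univ_succ, ← hb]
      simp only [Fin.cons_zero, Fin.cons_succ, Fin.tail]
      abel
    cases j using Fin.cases with
    | zero =>
      have hc0 : c * ⟪γ 0, γ 0⟫ = 2 * ⟪reflectionProd (Fin.tail γ) y, γ 0⟫ :=
        div_mul_cancel₀ _ (inner_self_ne_zero.mpr (hγ.ne_zero 0))
      have hb0 : ∑ m, b m * ⟪γ m.succ, γ 0⟫ = ⟪y - reflectionProd (Fin.tail γ) y, γ 0⟫ := by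
        simp only [← hb, sum_inner, real_inner_smul_left, Fin.tail]
      simp only [Fin.Ioi_zero_eq_map, Finset.sum_map, Fin.coe_succEmb, Fin.cons_zero,
        Fin.cons_succ, hc0, hb0, inner_sub_left]
      ring
    | succ j =>
      simpa only [Fin.Ioi_succ, Finset.sum_map, Fin.coe_succEmb, Fin.cons_succ, Fin.tail] using
        ih (linearIndependent_finSucc.mp hγ).1 hb.symm j

theorem exists_mem_span_sub_reflectionProd_eq {n : ℕ} {γ : Fin n → E}
    (hfix : ∀ v ∈ Submodule.span ℝ (Set.range γ), reflectionProd γ v = v → v = 0)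
    {x : E} (hx : x ∈ Submodule.span ℝ (Set.range γ)) :
    ∃ y ∈ Submodule.span ℝ (Set.range γ), y - reflectionProd γ y = x := by
  let T : Submodule.span ℝ (Set.range γ) →ₗ[ℝ] Submodule.span ℝ (Set.range γ) :=
    (LinearMap.id - reflectionProdₗ γ).restrict fun v _ => by
      simpa [coe_reflectionProdₗ] using sub_reflectionProd_mem_span γ v
  have hT (v) : (T v : E) = v - reflectionProd γ v := by simp [T, coe_reflectionProdₗ]
  have hT_inj : Function.Injective T := by
    rw [← LinearMap.ker_eq_bot, LinearMap.ker_eq_bot']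
    intro v hv
    refine Subtype.ext (hfix v v.2 (sub_eq_zero.mp ?_).symm)
    rw [← hT, hv, Submodule.coe_zero]
  have := FiniteDimensional.span_of_finite ℝ (Set.finite_range γ)
  obtain ⟨y, hy⟩ := LinearMap.injective_iff_surjective.mp hT_inj ⟨x, hx⟩
  exact ⟨y, y.2, by rw [← hT, hy]⟩

end

/-- `C γ_i = (1 + s)(1 - s)⁻¹ γ_i` is encoded as `y + s y` for a solution `y ∈ h'` of
`y - s y = γ_i`. -/
theorem cayley_transform_matrix_elements
    {E : Type*} [NormedAddCommGroup E] [InnerProductSpace ℝ E]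
    {l' : ℕ} (γ : Fin l' → E) (hind : LinearIndependent ℝ γ)
    (s : E → E)
    (hs : s = (List.ofFn fun i : Fin l' => rootReflection (γ i)).foldr (· ∘ ·) id)
    (hnofix : ∀ v ∈ Submodule.span ℝ (Set.range γ), s v = v → v = 0) :
    ∀ i j : Fin l',
      (∃ y ∈ Submodule.span ℝ (Set.range γ), y - s y = γ i) ∧
      (∀ y ∈ Submodule.span ℝ (Set.range γ), y - s y = γ i →
        ⟪y + s y, γ j⟫ = epsSign i j * ⟪γ i, γ j⟫) := by
  change s = reflectionProd γ at hs
  subst hs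
  intro i j
  refine ⟨exists_mem_span_sub_reflectionProd_eq hnofix (Submodule.subset_span ⟨i, rfl⟩),
    fun y _ hy => ?_⟩
  have h2y := two_inner_eq_of_sub_reflectionProd_eq_sum hind (a := Pi.single i 1) (y := y)
    (by simp [hy, Pi.single_apply]) j
  simp only [Pi.single_apply, ite_mul, one_mul, zero_mul, Finset.sum_ite_eq', Finset.mem_Ioi]
    at h2y
  have hsy : reflectionProd γ y = y - γ i := by rw [← hy, sub_sub_cancel]
  rw [hsy, inner_add_left, inner_sub_left]
  rcases lt_trichotomy i j with hij | rfl | hij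
  · simp only [epsSign, hij, hij.ne, hij.ne', hij.not_gt, if_true, if_false] at h2y ⊢
    linarith
  · simp only [epsSign, lt_irrefl, if_true, if_false] at h2y ⊢
    linarith
  · simp only [epsSign, hij, hij.ne, hij.ne', hij.not_gt, if_true, if_false] at h2y ⊢
    linarith
end

section
/- With A = ℂ_ε[SL₂*] as above (ε generic), M₋ = ℂ[e] the subalgebra generated by e, χ : M₋ → ℂ the character with χ(e) = 1, and Q = A ⊗_{M₋} ℂ_χ the induced module with cyclic vector v: the elements v_{mk} = t^m Ω^k v, for m ∈ ℤ and k ∈ ℕ, form a ℂ-linear basis of Q, and e acts on v_{mk} by e · v_{mk} = ε^{-m} v_{mk}. In particular the action of e - 1 on Q is diagonalizable (semisimple), not locally nilpotent. -/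
/-
In `A`, conjugation by `t` scales `e` by `ε` and `f` by `ε⁻¹`, and `Ω` is central. Since
`v e = v` in `Q = A / A(e - 1)`, this gives `e • v_{mk} = ε^{-m} v_{mk}`,
`t^{±1} • v_{mk} = v_{m±1,k}` and, writing `fe = Ω - (ε t² + ε⁻¹ t⁻²)/(ε - ε⁻¹)²`,
`f • v_{mk} = ε^m (v_{m,k+1} - ε (ε - ε⁻¹)⁻² v_{m+2,k} - ε⁻¹ (ε - ε⁻¹)⁻² v_{m-2,k})`.
So the span of the `v_{mk}` is `A`-stable and contains `v`, hence is `Q`. Conversely the same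
formulas satisfy the defining relations on the free vector space with basis `w_{mk}` (here
`ε² ≠ 1` is needed), and evaluating this representation at `w_{00}` is a linear map out of `Q`
sending `v_{mk}` to `w_{mk}`, which proves independence. Finally `v_{10}` is an eigenvector of
`e - 1` with eigenvalue `ε⁻¹ - 1 ≠ 0`.
-/

namespace SL2Star

/-- Generators of `ℂ_ε[SL₂*]`: `e`, `f`, `t`, `t⁻¹`. -/
inductive Gen | e | f | t | tinv

open Gen

/-- The defining relations of `ℂ_ε[SL₂*]`. -/
inductive Rel (ε : ℂ) : FreeAlgebra ℂ Gen → FreeAlgebra ℂ Gen → Prop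
  | tt : Rel ε (FreeAlgebra.ι ℂ t * FreeAlgebra.ι ℂ tinv) 1
  | tt' : Rel ε (FreeAlgebra.ι ℂ tinv * FreeAlgebra.ι ℂ t) 1
  | te : Rel ε (FreeAlgebra.ι ℂ t * FreeAlgebra.ι ℂ e * FreeAlgebra.ι ℂ tinv)
      (ε • FreeAlgebra.ι ℂ e)
  | tf : Rel ε (FreeAlgebra.ι ℂ t * FreeAlgebra.ι ℂ f * FreeAlgebra.ι ℂ tinv)
      (ε⁻¹ • FreeAlgebra.ι ℂ f)
  | ef : Rel ε (FreeAlgebra.ι ℂ e * FreeAlgebra.ι ℂ f - FreeAlgebra.ι ℂ f * FreeAlgebra.ι ℂ e)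
      ((ε - ε⁻¹)⁻¹ • (FreeAlgebra.ι ℂ t * FreeAlgebra.ι ℂ t -
        FreeAlgebra.ι ℂ tinv * FreeAlgebra.ι ℂ tinv))

/-- The algebra `ℂ_ε[SL₂*]`. -/
abbrev Alg (ε : ℂ) := RingQuot (Rel ε)

noncomputable def E (ε : ℂ) : Alg ε := RingQuot.mkAlgHom ℂ (Rel ε) (FreeAlgebra.ι ℂ e)
noncomputable def F (ε : ℂ) : Alg ε := RingQuot.mkAlgHom ℂ (Rel ε) (FreeAlgebra.ι ℂ f)
noncomputable def T (ε : ℂ) : Alg ε := RingQuot.mkAlgHom ℂ (Rel ε) (FreeAlgebra.ι ℂ t)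
noncomputable def Tinv (ε : ℂ) : Alg ε := RingQuot.mkAlgHom ℂ (Rel ε) (FreeAlgebra.ι ℂ tinv)

/-- `t^m` for `m ∈ ℤ` (using `t⁻¹` for negative exponents). -/
noncomputable def Tz (ε : ℂ) (m : ℤ) : Alg ε :=
  if 0 ≤ m then T ε ^ m.toNat else Tinv ε ^ (-m).toNat

/-- The quantum Casimir `Ω = (ε t² + ε⁻¹ t⁻²)/(ε - ε⁻¹)² + f e`. -/
noncomputable def Omega (ε : ℂ) : Alg ε :=
  ((ε - ε⁻¹) ^ 2)⁻¹ • (ε • (T ε * T ε) + ε⁻¹ • (Tinv ε * Tinv ε)) + F ε * E ε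

/-- The left ideal of `ℂ_ε[SL₂*]` generated by `e - 1`, i.e. the kernel of the projection
onto `Q = A ⊗_{M₋} ℂ_χ` where `χ(e) = 1`. -/
noncomputable def I (ε : ℂ) : Ideal (Alg ε) := Ideal.span {E ε - 1}

/-- The induced (Whittaker) module `Q = A ⊗_{ℂ[e]} ℂ_χ = A / A(e-1)`. -/
abbrev Q (ε : ℂ) := Alg ε ⧸ I ε

/-- The vectors `v_{mk} = tᵐ Ωᵏ v`, where `v` is the image of `1`. -/
noncomputable def vBasis (ε : ℂ) : ℤ × ℕ → Q ε :=
  fun p => Submodule.Quotient.mk (Tz ε p.1 * Omega ε ^ p.2)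

end SL2Star

section ScalarCommutation

variable {K R : Type*} [Semiring R]

theorem pow_mul_eq_smul_mul_pow [CommSemiring K] [Algebra K R] {u a : R} {c : K} (h : u * a = c • (a * u)) (n : ℕ) :
    u ^ n * a = c ^ n • (a * u ^ n) := by
  induction n with
  | zero => simp
  | succ n ih =>
    rw [pow_succ, mul_assoc, h, mul_smul_comm, ← mul_assoc, ih, smul_mul_assoc, smul_smul,
      mul_assoc, ← pow_succ, ← pow_succ']

theorem Units.zpow_mul_eq_smul_mul_zpow [Field K] [Algebra K R] {u : Rˣ} {a : R} {c : K} (hc : c ≠ 0)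
    (h : ↑u * a = c • (a * ↑u)) (m : ℤ) : ↑(u ^ m) * a = c ^ m • (a * ↑(u ^ m)) := by
  have h_inv : ↑u⁻¹ * a = c⁻¹ • (a * ↑u⁻¹) := by
    rw [eq_inv_smul_iff₀ hc]
    calc c • (↑u⁻¹ * a) = ↑u⁻¹ * (c • (a * ↑u)) * ↑u⁻¹ := by
          simp [mul_assoc]
      _ = a * ↑u⁻¹ := by simp [← h]
  obtain ⟨n, rfl | rfl⟩ := m.eq_nat_or_neg
  · simpa using pow_mul_eq_smul_mul_pow h n
  · simpa [zpow_neg, ← inv_zpow', ← inv_pow] using pow_mul_eq_smul_mul_pow h_inv n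

end ScalarCommutation

theorem iterate_smul_sub_self_of_smul_eq {A K M : Type*} [Semiring A] [CommRing K]
    [AddCommGroup M] [Module A M] [Module K M] [SMulCommClass A K M] {a : A} {c : K} {q : M}
    (h : a • q = c • q) (n : ℕ) : (fun x => a • x - x)^[n] q = (c - 1) ^ n • q := by
  induction n with
  | zero => simp
  | succ n ih =>
    rw [Function.iterate_succ_apply', ih, smul_comm, h]
    module

namespace SL2Star

variable {ε : ℂ}

theorem T_mul_Tinv : T ε * Tinv ε = 1 := by
  simpa [T, Tinv] using RingQuot.mkAlgHom_rel ℂ (Rel.tt (ε := ε))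

theorem Tinv_mul_T : Tinv ε * T ε = 1 := by
  simpa [T, Tinv] using RingQuot.mkAlgHom_rel ℂ (Rel.tt' (ε := ε))

theorem T_mul_E_mul_Tinv : T ε * E ε * Tinv ε = ε • E ε := by
  simpa [E, T, Tinv] using RingQuot.mkAlgHom_rel ℂ (Rel.te (ε := ε))

theorem T_mul_F_mul_Tinv : T ε * F ε * Tinv ε = ε⁻¹ • F ε := by
  simpa [F, T, Tinv] using RingQuot.mkAlgHom_rel ℂ (Rel.tf (ε := ε))

theorem E_mul_F_sub_F_mul_E :
    E ε * F ε - F ε * E ε = (ε - ε⁻¹)⁻¹ • (T ε * T ε - Tinv ε * Tinv ε) := by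
  simpa [E, F, T, Tinv] using RingQuot.mkAlgHom_rel ℂ (Rel.ef (ε := ε))

variable (ε) in
noncomputable def tUnit : (Alg ε)ˣ := ⟨T ε, Tinv ε, T_mul_Tinv, Tinv_mul_T⟩

theorem Tz_eq_tUnit_zpow (m : ℤ) : Tz ε m = ↑(tUnit ε ^ m) := by
  obtain ⟨n, rfl | rfl⟩ := m.eq_nat_or_neg
  · simp [Tz, tUnit]
  · rw [Tz]
    split_ifs with h
    · obtain rfl : n = 0 := by omega
      simp
    · simp [zpow_neg, ← inv_pow, tUnit]

theorem Tz_add (m n : ℤ) : Tz ε (m + n) = Tz ε m * Tz ε n := by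
  simp [Tz_eq_tUnit_zpow, zpow_add]

theorem T_mul_E : T ε * E ε = ε • (E ε * T ε) := by
  rw [← smul_mul_assoc, ← T_mul_E_mul_Tinv, mul_assoc (T ε * E ε), Tinv_mul_T, mul_one]

theorem T_mul_F : T ε * F ε = ε⁻¹ • (F ε * T ε) := by
  rw [← smul_mul_assoc, ← T_mul_F_mul_Tinv, mul_assoc (T ε * F ε), Tinv_mul_T, mul_one]

theorem Tz_one : Tz ε 1 = T ε := by simp [Tz]

theorem Tz_neg_one : Tz ε (-1) = Tinv ε := by simp [Tz]

theorem Tz_two : Tz ε 2 = T ε * T ε := by simp [Tz, sq]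

theorem Tz_neg_two : Tz ε (-2) = Tinv ε * Tinv ε := by simp [Tz, sq]

theorem E_mul_Tz (hε : ε ≠ 0) (m : ℤ) : E ε * Tz ε m = ε ^ (-m) • (Tz ε m * E ε) := by
  rw [Tz_eq_tUnit_zpow, Units.zpow_mul_eq_smul_mul_zpow hε T_mul_E, smul_smul,
    ← zpow_add₀ hε, neg_add_cancel, zpow_zero, one_smul]

theorem F_mul_Tz (hε : ε ≠ 0) (m : ℤ) : F ε * Tz ε m = ε ^ m • (Tz ε m * F ε) := by
  rw [Tz_eq_tUnit_zpow, Units.zpow_mul_eq_smul_mul_zpow (inv_ne_zero hε) T_mul_F, smul_smul,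
    inv_zpow', ← zpow_add₀ hε, add_neg_cancel, zpow_zero, one_smul]

theorem E_mul_F :
    E ε * F ε = F ε * E ε + (ε - ε⁻¹)⁻¹ • (Tz ε 2 - Tz ε (-2)) := by
  rw [Tz_two, Tz_neg_two, ← E_mul_F_sub_F_mul_E, add_sub_cancel]

theorem Omega_eq :
    Omega ε = ((ε - ε⁻¹) ^ 2)⁻¹ • (ε • Tz ε 2 + ε⁻¹ • Tz ε (-2)) + F ε * E ε := by
  rw [Omega, Tz_two, Tz_neg_two]

theorem commute_Omega_Tz (hε : ε ≠ 0) (m : ℤ) : Commute (Omega ε) (Tz ε m) := by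
  have hT : Commute (T ε) (F ε * E ε) := by
    rw [Commute, SemiconjBy, ← mul_assoc, T_mul_F, smul_mul_assoc, mul_assoc, T_mul_E,
      mul_smul_comm, smul_smul, inv_mul_cancel₀ hε, one_smul, mul_assoc]
  have hTz : ∀ n, Commute (T ε) (Tz ε n) := fun n => by
    rw [Tz_eq_tUnit_zpow]
    exact ((Commute.refl (tUnit ε)).zpow_right n).units_val
  rw [Tz_eq_tUnit_zpow]
  refine Commute.units_zpow_right ?_ m
  rw [Omega_eq]
  refine (Commute.add_right (Commute.smul_right ?_ _) hT).symm
  exact ((hTz 2).smul_right ε).add_right ((hTz (-2)).smul_right ε⁻¹)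

theorem commute_Omega_E (hε : ε ≠ 0) : Commute (Omega ε) (E ε) := by
  rw [Commute, SemiconjBy, Omega_eq]
  simp only [mul_add, add_mul, smul_add, mul_smul_comm, smul_mul_assoc, ← mul_assoc, E_mul_Tz hε,
    E_mul_F, sub_mul, smul_sub, zpow_neg, zpow_ofNat]
  simp only [mul_assoc]
  match_scalars <;> field_simp <;> ring

theorem commute_Omega_F (hε : ε ≠ 0) : Commute (Omega ε) (F ε) := by
  rw [Commute, SemiconjBy, Omega_eq]
  simp only [mul_add, add_mul, smul_add, mul_smul_comm, smul_mul_assoc, mul_assoc, F_mul_Tz hε,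
    E_mul_F, mul_sub, smul_sub]
  simp only [← mul_assoc]
  match_scalars <;> field_simp <;> ring

theorem smul_mk (a b : Alg ε) :
    a • (Submodule.Quotient.mk b : Q ε) = Submodule.Quotient.mk (a * b) :=
  Submodule.Quotient.mk_smul _ a b

theorem mk_mul_E (a : Alg ε) :
    (Submodule.Quotient.mk (a * E ε) : Q ε) = Submodule.Quotient.mk a := by
  rw [Submodule.Quotient.eq, ← mul_sub_one]
  exact Ideal.mul_mem_left _ a (Ideal.subset_span rfl)

theorem vBasis_apply (m : ℤ) (k : ℕ) :
    vBasis ε (m, k) = Submodule.Quotient.mk (Tz ε m * Omega ε ^ k) :=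
  rfl

theorem Tz_smul_vBasis (n m : ℤ) (k : ℕ) : Tz ε n • vBasis ε (m, k) = vBasis ε (n + m, k) := by
  rw [vBasis_apply, vBasis_apply, smul_mk, ← mul_assoc, ← Tz_add]

theorem E_smul_vBasis (hε : ε ≠ 0) (m : ℤ) (k : ℕ) :
    E ε • vBasis ε (m, k) = ε ^ (-m) • vBasis ε (m, k) := by
  rw [vBasis_apply, smul_mk, ← mul_assoc, E_mul_Tz hε, smul_mul_assoc, mul_assoc,
    ← ((commute_Omega_E hε).pow_left k).eq, ← mul_assoc, Submodule.Quotient.mk_smul, mk_mul_E]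

theorem F_smul_vBasis (hε : ε ≠ 0) (m : ℤ) (k : ℕ) :
    F ε • vBasis ε (m, k) = ε ^ m • (vBasis ε (m, k + 1)
        - (((ε - ε⁻¹) ^ 2)⁻¹ * ε) • vBasis ε (m + 2, k)
        - (((ε - ε⁻¹) ^ 2)⁻¹ * ε⁻¹) • vBasis ε (m - 2, k)) := by
  have hTz (n : ℤ) : Tz ε m * Omega ε ^ k * Tz ε n = Tz ε (m + n) * Omega ε ^ k := by
    rw [mul_assoc, ((commute_Omega_Tz hε n).pow_left k).eq, ← mul_assoc, Tz_add]
  have hFE : Tz ε m * Omega ε ^ k * (F ε * E ε) = Tz ε m * Omega ε ^ (k + 1)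
      - (((ε - ε⁻¹) ^ 2)⁻¹ * ε) • (Tz ε (m + 2) * Omega ε ^ k)
      - (((ε - ε⁻¹) ^ 2)⁻¹ * ε⁻¹) • (Tz ε (m - 2) * Omega ε ^ k) := by
    rw [eq_sub_of_add_eq' Omega_eq.symm, mul_sub, mul_smul_comm, mul_add, mul_smul_comm,
      mul_smul_comm, hTz, hTz, mul_assoc, ← pow_succ, ← sub_eq_add_neg]
    module
  rw [vBasis_apply, smul_mk, ← mul_assoc, F_mul_Tz hε, smul_mul_assoc, mul_assoc,
    ← ((commute_Omega_F hε).pow_left k).eq, ← mul_assoc, Submodule.Quotient.mk_smul, ← mk_mul_E,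
    mul_assoc _ (F ε), hFE]
  simp only [Submodule.Quotient.mk_smul, Submodule.Quotient.mk_sub, ← vBasis_apply]

theorem Alg.induction {P : Alg ε → Prop} (algebraMap : ∀ c : ℂ, P (algebraMap ℂ (Alg ε) c))
    (E : P (E ε)) (F : P (F ε)) (T : P (T ε)) (Tinv : P (Tinv ε))
    (add : ∀ a b, P a → P b → P (a + b)) (mul : ∀ a b, P a → P b → P (a * b)) (a : Alg ε) :
    P a := by
  obtain ⟨x, rfl⟩ := RingQuot.mkAlgHom_surjective ℂ (Rel ε) a
  induction x using FreeAlgebra.induction with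
  | grade0 c => simpa using algebraMap c
  | grade1 g => cases g <;> assumption
  | mul x y hx hy => simpa using mul _ _ hx hy
  | add x y hx hy => simpa using add _ _ hx hy

theorem smul_mem_span_vBasis (hε : ε ≠ 0) (a : Alg ε) {q : Q ε}
    (hq : q ∈ Submodule.span ℂ (Set.range (vBasis ε))) :
    a • q ∈ Submodule.span ℂ (Set.range (vBasis ε)) := by
  set S := Submodule.span ℂ (Set.range (vBasis ε))
  have hv (p : ℤ × ℕ) : vBasis ε p ∈ S := Submodule.subset_span ⟨p, rfl⟩
  have of_vBasis (b : Alg ε) (hb : ∀ m k, b • vBasis ε (m, k) ∈ S) {q : Q ε} (hq : q ∈ S) :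
      b • q ∈ S :=
    Submodule.span_induction (fun _ ⟨p, hp⟩ => hp ▸ hb p.1 p.2) (by simp)
      (fun x y _ _ hx hy => by rw [smul_add]; exact add_mem hx hy)
      (fun c x _ hx => by rw [smul_comm]; exact S.smul_mem c hx) hq
  induction a using Alg.induction generalizing q with
  | algebraMap c => simpa [algebraMap_smul] using S.smul_mem c hq
  | E => exact of_vBasis _ (fun m k => by rw [E_smul_vBasis hε]; exact S.smul_mem _ (hv _)) hq
  | F =>
    refine of_vBasis _ (fun m k => ?_) hq
    rw [F_smul_vBasis hε]
    exact S.smul_mem _ (sub_mem (sub_mem (hv _) (S.smul_mem _ (hv _))) (S.smul_mem _ (hv _)))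
  | T => exact of_vBasis _ (fun m k => by rw [← Tz_one, Tz_smul_vBasis]; exact hv _) hq
  | Tinv => exact of_vBasis _ (fun m k => by rw [← Tz_neg_one, Tz_smul_vBasis]; exact hv _) hq
  | add a b ha hb => rw [add_smul]; exact add_mem (ha hq) (hb hq)
  | mul a b ha hb => rw [mul_smul]; exact ha (hb hq)

theorem span_vBasis (hε : ε ≠ 0) : Submodule.span ℂ (Set.range (vBasis ε)) = ⊤ := by
  refine eq_top_iff.mpr fun q _ => ?_
  obtain ⟨a, rfl⟩ := Submodule.Quotient.mk_surjective _ q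
  have h1 : vBasis ε (0, 0) = Submodule.Quotient.mk 1 := by simp [vBasis_apply, Tz]
  simpa [h1, smul_mk] using smul_mem_span_vBasis hε a (Submodule.subset_span ⟨(0, 0), rfl⟩)

abbrev Model := (ℤ × ℕ) →₀ ℂ

noncomputable def w (p : ℤ × ℕ) : Model := Finsupp.single p 1

noncomputable def tModel (n : ℤ) : Module.End ℂ Model :=
  Finsupp.lmapDomain ℂ ℂ fun p => (p.1 + n, p.2)

variable (ε) in
noncomputable def eModel : Module.End ℂ Model :=
  Finsupp.linearCombination ℂ fun p => ε ^ (-p.1) • w p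

variable (ε) in
noncomputable def fModel : Module.End ℂ Model :=
  Finsupp.linearCombination ℂ fun p => ε ^ p.1 • (w (p.1, p.2 + 1)
    - (((ε - ε⁻¹) ^ 2)⁻¹ * ε) • w (p.1 + 2, p.2) - (((ε - ε⁻¹) ^ 2)⁻¹ * ε⁻¹) • w (p.1 - 2, p.2))

@[simp] theorem tModel_w (n : ℤ) (p : ℤ × ℕ) : tModel n (w p) = w (p.1 + n, p.2) := by
  simp [tModel, w]

@[simp] theorem eModel_w (p : ℤ × ℕ) : eModel ε (w p) = ε ^ (-p.1) • w p := by
  simp [eModel, w]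

@[simp] theorem fModel_w (p : ℤ × ℕ) :
    fModel ε (w p) = ε ^ p.1 • (w (p.1, p.2 + 1) - (((ε - ε⁻¹) ^ 2)⁻¹ * ε) • w (p.1 + 2, p.2)
      - (((ε - ε⁻¹) ^ 2)⁻¹ * ε⁻¹) • w (p.1 - 2, p.2)) := by
  simp [fModel, w]

theorem Model.end_ext {f g : Module.End ℂ Model} (h : ∀ m k, f (w (m, k)) = g (w (m, k))) :
    f = g :=
  Finsupp.basisSingleOne.ext fun p => h p.1 p.2

variable (ε) in
noncomputable def genModel : Gen → Module.End ℂ Model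
  | .e => eModel ε
  | .f => fModel ε
  | .t => tModel 1
  | .tinv => tModel (-1)

theorem genModel_rel (hε : ε ≠ 0) (hε2 : ε ^ 2 ≠ 1) {x y : FreeAlgebra ℂ Gen} (h : Rel ε x y) :
    FreeAlgebra.lift ℂ (genModel ε) x = FreeAlgebra.lift ℂ (genModel ε) y := by
  have : ε ^ 2 - 1 ≠ 0 := sub_ne_zero.mpr hε2
  cases h <;> refine Model.end_ext fun m k => ?_ <;>
    simp [genModel, Module.End.mul_apply, smul_sub, smul_smul, zpow_add₀ hε, zpow_sub₀ hε,
      show m + -1 + 2 + 1 = m + 2 by ring, show m + -1 - 2 + 1 = m - 2 by ring,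
      show m + 1 + 1 = m + 2 by ring, show m + -1 + -1 = m - 2 by ring]
  all_goals match_scalars <;> field_simp <;> ring

section ModelRep

variable (hε : ε ≠ 0) (hε2 : ε ^ 2 ≠ 1)

noncomputable def modelRep : Alg ε →ₐ[ℂ] Module.End ℂ Model :=
  RingQuot.liftAlgHom ℂ ⟨FreeAlgebra.lift ℂ (genModel ε), fun _ _ h => genModel_rel hε hε2 h⟩

theorem modelRep_mkAlgHom_ι (g : Gen) :
    modelRep hε hε2 (RingQuot.mkAlgHom ℂ (Rel ε) (FreeAlgebra.ι ℂ g)) = genModel ε g := by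
  simp [modelRep]

@[simp] theorem modelRep_E : modelRep hε hε2 (E ε) = eModel ε := modelRep_mkAlgHom_ι hε hε2 .e
@[simp] theorem modelRep_F : modelRep hε hε2 (F ε) = fModel ε := modelRep_mkAlgHom_ι hε hε2 .f
@[simp] theorem modelRep_T : modelRep hε hε2 (T ε) = tModel 1 := modelRep_mkAlgHom_ι hε hε2 .t
@[simp] theorem modelRep_Tinv : modelRep hε hε2 (Tinv ε) = tModel (-1) :=
  modelRep_mkAlgHom_ι hε hε2 .tinv

theorem modelRep_Omega_w (m : ℤ) (k : ℕ) :
    modelRep hε hε2 (Omega ε) (w (m, k)) = w (m, k + 1) := by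
  have : ε ^ 2 - 1 ≠ 0 := sub_ne_zero.mpr hε2
  simp [Omega, Module.End.mul_apply, smul_sub, smul_smul,
    show m + 1 + 1 = m + 2 by ring, show m + -1 + -1 = m - 2 by ring]
  match_scalars <;> field_simp <;> ring

theorem modelRep_Tz_w (n m : ℤ) (k : ℕ) :
    modelRep hε hε2 (Tz ε n) (w (m, k)) = w (m + n, k) := by
  induction n using Int.induction_on with
  | zero => simp [Tz]
  | succ n ih =>
    rw [add_comm (n : ℤ), Tz_add, Tz_one, map_mul, Module.End.mul_apply, ih, modelRep_T, tModel_w]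
    ring_nf
  | pred n ih =>
    rw [sub_eq_neg_add, Tz_add, Tz_neg_one, map_mul, Module.End.mul_apply, ih, modelRep_Tinv,
      tModel_w]
    ring_nf

noncomputable def evalModel : Q ε →ₗ[ℂ] Model :=
  ((I ε).restrictScalars ℂ).liftQ
      ((LinearMap.applyₗ (w (0, 0))).comp (modelRep hε hε2).toLinearMap)
      (fun x hx => by
        obtain ⟨a, rfl⟩ := Submodule.mem_span_singleton.mp hx
        simp [Module.End.mul_apply])
    ∘ₗ (Submodule.Quotient.restrictScalarsEquiv ℂ (I ε)).symm.toLinearMap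

theorem evalModel_mk (a : Alg ε) :
    evalModel hε hε2 (Submodule.Quotient.mk a) = modelRep hε hε2 a (w (0, 0)) :=
  rfl

theorem evalModel_vBasis (m : ℤ) (k : ℕ) :
    evalModel hε hε2 (vBasis ε (m, k)) = w (m, k) := by
  have hΩ (k : ℕ) : modelRep hε hε2 (Omega ε ^ k) (w (0, 0)) = w (0, k) := by
    induction k with
    | zero => simp
    | succ k ih => rw [pow_succ', map_mul, Module.End.mul_apply, ih, modelRep_Omega_w]
  rw [vBasis_apply, evalModel_mk, map_mul, Module.End.mul_apply, hΩ, modelRep_Tz_w, zero_add]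

end ModelRep

theorem linearIndependent_vBasis (hε : ε ≠ 0) (hε2 : ε ^ 2 ≠ 1) :
    LinearIndependent ℂ (vBasis ε) := by
  have h : evalModel hε hε2 ∘ vBasis ε = Finsupp.basisSingleOne :=
    funext fun ⟨m, k⟩ => by simp [evalModel_vBasis, w]
  exact .of_comp (evalModel hε hε2) (h ▸ Finsupp.basisSingleOne.linearIndependent)

end SL2Star

open SL2Star in
/-- for generic `ε`, the vectors `v_{mk} = tᵐ Ωᵏ v` (`m ∈ ℤ`, `k ∈ ℕ`) form a
`ℂ`-basis of `Q = ℂ_ε[SL₂*] ⊗_{ℂ[e]} ℂ_χ`, and `e` acts on `v_{mk}` by the scalar `ε^{-m}`.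
In particular `e - 1` acts diagonalizably and not locally nilpotently on `Q`. -/
theorem whittaker_module_basis_and_semisimplicity
    (ε : ℂ) (hε : ε ≠ 0) (hroot : ∀ n : ℕ, 0 < n → ε ^ n ≠ 1) :
    LinearIndependent ℂ (vBasis ε) ∧
      Submodule.span ℂ (Set.range (vBasis ε)) = ⊤ ∧
      (∀ (m : ℤ) (k : ℕ), E ε • vBasis ε (m, k) = (ε ^ (-m) : ℂ) • vBasis ε (m, k)) ∧
      ∃ q : Q ε, ∀ n : ℕ, (fun x : Q ε => E ε • x - x)^[n] q ≠ 0 := by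
  have hli := linearIndependent_vBasis hε (hroot 2 two_pos)
  refine ⟨hli, span_vBasis hε, E_smul_vBasis hε, vBasis ε (1, 0), fun n => ?_⟩
  have hE : E ε • vBasis ε (1, 0) = ε⁻¹ • vBasis ε (1, 0) := by simpa using E_smul_vBasis hε 1 0
  have hε1 : ε⁻¹ - 1 ≠ 0 := sub_ne_zero.mpr (inv_ne_one.mpr (by simpa using hroot 1 one_pos))
  rw [iterate_smul_sub_self_of_smul_eq (K := ℂ) hE]
  exact smul_ne_zero (pow_ne_zero n hε1) (hli.ne_zero _)
end
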